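/- Let T be a tree on n vertices, v_1, ..., v_k distinct vertices, and s_1 ≥ ... ≥ s_k positive integers. Let T' = T(v_1, ..., v_k; s_1, ..., s_k) be obtained from T by attaching s_i pendant paths P_2 at v_i for each i (each pendant P_2 contributes a new path of length 2 hanging at v_i). Then λ_i(T') ≥ √(s_i + 1) + λ_n(T) for i = 1, ..., k. -/

import Mathlib

open scoped Classical

/-- Characteristic polynomial of the adjacency matrix of a graph. -/
noncomputable def gCharpoly {V : Type*} [Fintype V] (G : SimpleGraph V) : Polynomial ℝ :=
  letI := Classical.decEq V
  letI := Classical.decRel G.Adj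
  (G.adjMatrix ℝ).charpoly

/-- Adjacency eigenvalues listed in non-increasing order (with multiplicity). -/
noncomputable def eigsDesc {V : Type*} [Fintype V] (G : SimpleGraph V) : List ℝ :=
  ((gCharpoly G).roots.sort (· ≤ ·)).reverse

/-- Number of adjacency eigenvalues in the open interval (-1, 1), with multiplicity. -/
noncomputable def numIn {V : Type*} [Fintype V] (G : SimpleGraph V) : ℕ :=
  ((gCharpoly G).roots.filter (fun x => -1 < x ∧ x < 1)).card

/-- Multiplicity of `lam` as an adjacency eigenvalue. -/
noncomputable def multOf {V : Type*} [Fintype V] (G : SimpleGraph V) (lam : ℝ) : ℕ :=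
  (gCharpoly G).roots.count lam

/-- Nullity: dimension of the kernel of the adjacency matrix. -/
noncomputable def gNullity {V : Type*} [Fintype V] (G : SimpleGraph V) : ℕ :=
  letI := Classical.decRel G.Adj
  Module.finrank ℝ (LinearMap.ker (G.adjMatrix ℝ).mulVecLin)

/-- The tree `T(v₁, …, v_k; s₁, …, s_k)` obtained from `T` by attaching `s i`
pendant paths `P₂` at `v i`: for each `i` and each `j : Fin (s i)` there are a
middle vertex `Sum.inr (Sum.inl ⟨i, j⟩)` adjacent to `v i`, and an end vertex
`Sum.inr (Sum.inr ⟨i, j⟩)` adjacent to the middle vertex. -/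
def attachP2s {V : Type*} {k : ℕ} (T : SimpleGraph V) (v : Fin k → V) (s : Fin k → ℕ) :
    SimpleGraph (V ⊕ ((Σ i : Fin k, Fin (s i)) ⊕ (Σ i : Fin k, Fin (s i)))) :=
  SimpleGraph.fromRel (fun x y =>
    match x, y with
    | Sum.inl a, Sum.inl b => T.Adj a b
    | Sum.inl a, Sum.inr (Sum.inl p) => a = v p.1
    | Sum.inr (Sum.inl p), Sum.inr (Sum.inr q) => p = q
    | _, _ => False)

/-!
Split `A(T') = S + F`, where `S` is the adjacency matrix of the spiders alone
(`attachP2s ⊥ v s`) and `F` is `A(T)` padded with zeros. For each `j`, the vector with value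
`s j` at `v j`, `√(s j + 1)` on the middle vertices and `1` on the end vertices of the paths
hanging at `v j` is an eigenvector of `S` for `√(s j + 1)`, and these vectors are pairwise
orthogonal. On the `(i + 1)`-dimensional span of those with `j ≤ i`, the quadratic form of `S` is
at least `√(s i + 1) ‖x‖²` since `s` is antitone, and that of `F` is at least `λ_n(T) ‖x‖²`
since `λ_n(T) ≤ 0` (the diagonal of `A(T)` vanishes). The min-max principle then bounds the
`(i + 1)`-st largest eigenvalue of `T'` from below by the sum.
-/

open Matrix Module
open scoped InnerProductSpace

theorem Multiset.reverse_sort_le {α : Type*} [LinearOrder α] (M : Multiset α) :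
    (M.sort (· ≤ ·)).reverse = M.sort (· ≥ ·) := by
  rw [List.Perm.eq_reverse_of_sortedLE_of_sortedGE
    (Multiset.coe_eq_coe.mp (by rw [Multiset.sort_eq, Multiset.sort_eq]))
    (List.sortedLE_iff_pairwise.mpr (M.pairwise_sort _))
    (List.sortedGE_iff_pairwise.mpr (M.pairwise_sort _)), List.reverse_reverse]

namespace LinearMap.IsSymmetric

variable {𝕜 E : Type*} [RCLike 𝕜] [NormedAddCommGroup E] [InnerProductSpace 𝕜 E]
  [FiniteDimensional 𝕜 E] {T : E →ₗ[𝕜] E} {n : ℕ} (hT : T.IsSymmetric) (hn : finrank 𝕜 E = n)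

theorem re_inner_apply_eq_sum_eigenvalues (x : E) :
    RCLike.re ⟪x, T x⟫_𝕜 =
      ∑ j, hT.eigenvalues hn j * ‖(hT.eigenvectorBasis hn).repr x j‖ ^ 2 := by
  rw [← (hT.eigenvectorBasis hn).repr.inner_map_map, PiLp.inner_apply, map_sum]
  refine Finset.sum_congr rfl fun j _ => ?_
  rw [hT.eigenvectorBasis_apply_self_apply, ← smul_eq_mul, inner_smul_right,
    inner_self_eq_norm_sq_to_K, ← RCLike.ofReal_pow, ← RCLike.ofReal_mul, RCLike.ofReal_re]

theorem norm_sq_eq_sum_eigenvectorBasis (x : E) :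
    ‖x‖ ^ 2 = ∑ j, ‖(hT.eigenvectorBasis hn).repr x j‖ ^ 2 := by
  rw [← (hT.eigenvectorBasis hn).repr.norm_map, EuclideanSpace.norm_sq_eq]

theorem mul_norm_sq_le_re_inner_apply {c : ℝ} (hc : ∀ j, c ≤ hT.eigenvalues hn j) (x : E) :
    c * ‖x‖ ^ 2 ≤ RCLike.re ⟪x, T x⟫_𝕜 := by
  rw [hT.re_inner_apply_eq_sum_eigenvalues hn, hT.norm_sq_eq_sum_eigenvectorBasis hn,
    Finset.mul_sum]
  gcongr with j
  exact hc j

/-- The easy half of the Courant–Fischer min-max principle. -/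
theorem le_eigenvalues_of_forall_mem {W : Submodule 𝕜 E} {c : ℝ}
    (hW : ∀ x ∈ W, c * ‖x‖ ^ 2 ≤ RCLike.re ⟪x, T x⟫_𝕜) {i : Fin n}
    (hi : (i : ℕ) < finrank 𝕜 W) :
    c ≤ hT.eigenvalues hn i := by
  let b := hT.eigenvectorBasis hn
  -- As `finrank W > i`, some nonzero `x ∈ W` has vanishing first `i` eigen-coordinates.
  let leading : W →ₗ[𝕜] Fin i → 𝕜 :=
    (LinearMap.pi fun j : Fin i =>
      (EuclideanSpace.proj (Fin.castLT j (j.2.trans i.2))).toLinearMap ∘ₗ b.repr.toLinearMap) ∘ₗ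
      W.subtype
  obtain ⟨⟨x, hxW⟩, hx_ker, hne⟩ :=
    Submodule.exists_mem_ne_zero_of_ne_bot (leading.ker_ne_bot_of_finrank_lt (by simpa))
  have hx0 : x ≠ 0 := by simpa using hne
  have hlead : ∀ j : Fin n, j < i → b.repr x j = 0 := fun j hj =>
    congrFun (LinearMap.mem_ker.mp hx_ker) ⟨j, hj⟩
  have hupper : RCLike.re ⟪x, T x⟫_𝕜 ≤ hT.eigenvalues hn i * ‖x‖ ^ 2 := by
    rw [hT.re_inner_apply_eq_sum_eigenvalues hn, hT.norm_sq_eq_sum_eigenvectorBasis hn,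
      Finset.mul_sum]
    refine Finset.sum_le_sum fun j _ => ?_
    rcases lt_or_ge j i with hj | hj
    · simp [b, hlead j hj]
    · exact mul_le_mul_of_nonneg_right (hT.eigenvalues_antitone hn hj) (by positivity)
  exact le_of_mul_le_mul_right ((hW x hxW).trans hupper) (by positivity)

end LinearMap.IsSymmetric

theorem EuclideanSpace.norm_toLp_sq {m : Type*} [Fintype m] (x : m → ℝ) :
    ‖WithLp.toLp 2 x‖ ^ 2 = x ⬝ᵥ x := by
  rw [← real_inner_self_eq_norm_sq, EuclideanSpace.inner_toLp_toLp, star_trivial]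

namespace Matrix.IsHermitian

variable {m : Type*} [Fintype m] [DecidableEq m] {A : Matrix m m ℝ} (hA : A.IsHermitian)

theorem mul_dotProduct_self_le_of_le_eigenvalues₀ {c : ℝ} (hc : ∀ j, c ≤ hA.eigenvalues₀ j)
    (x : m → ℝ) : c * (x ⬝ᵥ x) ≤ x ⬝ᵥ (A *ᵥ x) := by
  simpa [EuclideanSpace.norm_toLp_sq, EuclideanSpace.inner_toLp_toLp, dotProduct_comm] using
    (isSymmetric_toEuclideanLin_iff.mpr hA).mul_norm_sq_le_re_inner_apply
      finrank_euclideanSpace hc (WithLp.toLp 2 x)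

theorem le_eigenvalues₀_of_forall_mem {W : Submodule ℝ (m → ℝ)} {c : ℝ}
    (hW : ∀ x ∈ W, c * (x ⬝ᵥ x) ≤ x ⬝ᵥ (A *ᵥ x)) {i : Fin (Fintype.card m)}
    (hi : (i : ℕ) < finrank ℝ W) : c ≤ hA.eigenvalues₀ i := by
  let e := (WithLp.linearEquiv 2 ℝ (m → ℝ)).symm
  refine (isSymmetric_toEuclideanLin_iff.mpr hA).le_eigenvalues_of_forall_mem
    finrank_euclideanSpace (W := W.map e.toLinearMap) ?_ (by rwa [e.finrank_map_eq])
  rintro _ ⟨x, hxW, rfl⟩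
  simpa [e, EuclideanSpace.norm_toLp_sq, EuclideanSpace.inner_toLp_toLp, dotProduct_comm]
    using hW x hxW

end Matrix.IsHermitian

section OrthogonalFamily

variable {m ι : Type*} [Fintype m] {X : ι → m → ℝ}

theorem sum_smul_dotProduct_sum_smul [Fintype ι] (hX : Pairwise fun l l' => X l ⬝ᵥ X l' = 0)
    (z w : ι → ℝ) :
    (∑ l, z l • X l) ⬝ᵥ (∑ l, w l • X l) = ∑ l, z l * w l * (X l ⬝ᵥ X l) := by
  simp only [sum_dotProduct, dotProduct_sum, smul_dotProduct, dotProduct_smul, smul_eq_mul]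
  refine Finset.sum_congr rfl fun l _ => ?_
  rw [Fintype.sum_eq_single l fun l' hl' => by rw [hX hl', mul_zero]]
  ring

theorem linearIndependent_of_ne_zero_of_dotProduct_eq_zero (hX0 : ∀ l, X l ≠ 0)
    (hX : Pairwise fun l l' => X l ⬝ᵥ X l' = 0) : LinearIndependent ℝ X :=
  (linearIndependent_of_ne_zero_of_inner_eq_zero (𝕜 := ℝ) (v := fun l => WithLp.toLp 2 (X l))
    (by simpa using hX0) fun l l' h => by
      simpa [EuclideanSpace.inner_toLp_toLp, dotProduct_comm] using hX h).map'
    (WithLp.linearEquiv 2 ℝ (m → ℝ)).toLinearMap (LinearEquiv.ker _)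

theorem Matrix.mul_dotProduct_self_le_of_mem_span [Fintype ι] {A : Matrix m m ℝ}
    {μ : ι → ℝ} (hAX : ∀ l, A *ᵥ X l = μ l • X l) (hX : Pairwise fun l l' => X l ⬝ᵥ X l' = 0)
    {c : ℝ} (hc : ∀ l, c ≤ μ l) {x : m → ℝ} (hx : x ∈ Submodule.span ℝ (Set.range X)) :
    c * (x ⬝ᵥ x) ≤ x ⬝ᵥ (A *ᵥ x) := by
  obtain ⟨z, rfl⟩ := Submodule.mem_span_range_iff_exists_fun ℝ |>.mp hx
  have hAx : A *ᵥ ∑ l, z l • X l = ∑ l, (z l * μ l) • X l := by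
    simp only [mulVec_sum, mulVec_smul, hAX, smul_smul]
  rw [hAx, sum_smul_dotProduct_sum_smul hX, sum_smul_dotProduct_sum_smul hX, Finset.mul_sum]
  refine Finset.sum_le_sum fun l _ => ?_
  have hXl : 0 ≤ X l ⬝ᵥ X l := Finset.sum_nonneg fun _ _ => mul_self_nonneg _
  nlinarith [mul_nonneg (mul_self_nonneg (z l)) hXl, hc l]

end OrthogonalFamily

theorem Matrix.dotProduct_fromBlocks_zero_mulVec {l n α : Type*} [Fintype l] [Fintype n]
    [NonUnitalNonAssocSemiring α] (A : Matrix l l α) (x : l ⊕ n → α) :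
    x ⬝ᵥ (fromBlocks A 0 0 0 *ᵥ x) = (x ∘ Sum.inl) ⬝ᵥ (A *ᵥ (x ∘ Sum.inl)) := by
  simp [dotProduct, mulVec, fromBlocks, Fintype.sum_sum_type]

namespace SimpleGraph

variable {V : Type*} [Fintype V] [DecidableEq V] (G : SimpleGraph V) [DecidableRel G.Adj]

theorem eigsDesc_eq_ofFn : eigsDesc G = List.ofFn (G.isHermitian_adjMatrix ℝ).eigenvalues₀ := by
  have h := (G.isHermitian_adjMatrix ℝ).sort_roots_charpoly_eq_eigenvalues₀
  have hc : gCharpoly G = (G.adjMatrix ℝ).charpoly := by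
    unfold gCharpoly; congr!
  simp only [RCLike.re_to_real, Multiset.map_id'] at h
  rw [eigsDesc, hc, Multiset.reverse_sort_le, h]

theorem le_eigsDesc_getD_of_forall_mem {W : Submodule ℝ (V → ℝ)} {c : ℝ}
    (hW : ∀ x ∈ W, c * (x ⬝ᵥ x) ≤ x ⬝ᵥ (G.adjMatrix ℝ *ᵥ x)) {i : ℕ} (hi : i < finrank ℝ W) :
    c ≤ (eigsDesc G).getD i 0 := by
  have hiV : i < Fintype.card V :=
    hi.trans_le (W.finrank_le.trans_eq (finrank_fintype_fun_eq_card ℝ))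
  rw [eigsDesc_eq_ofFn, List.getD_eq_getElem _ _ (by simpa), List.getElem_ofFn]
  exact (G.isHermitian_adjMatrix ℝ).le_eigenvalues₀_of_forall_mem hW (i := ⟨i, hiV⟩) hi

theorem eigsDesc_getD_card_sub_one_mul_le (x : V → ℝ) :
    (eigsDesc G).getD (Fintype.card V - 1) 0 * (x ⬝ᵥ x) ≤ x ⬝ᵥ (G.adjMatrix ℝ *ᵥ x) := by
  rcases isEmpty_or_nonempty V with hV | hV
  · simp [dotProduct]
  have hlast : Fintype.card V - 1 < Fintype.card V := Nat.sub_one_lt Fintype.card_ne_zero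
  rw [eigsDesc_eq_ofFn, List.getD_eq_getElem _ _ (by simpa using hlast), List.getElem_ofFn]
  refine (G.isHermitian_adjMatrix ℝ).mul_dotProduct_self_le_of_le_eigenvalues₀ (fun j => ?_) x
  exact (G.isHermitian_adjMatrix ℝ).eigenvalues₀_antitone
    (Fin.le_def.mpr (Nat.le_sub_one_of_lt j.2))

theorem eigsDesc_getD_card_sub_one_nonpos : (eigsDesc G).getD (Fintype.card V - 1) 0 ≤ 0 := by
  rcases isEmpty_or_nonempty V with hV | hV
  · simp [eigsDesc_eq_ofFn]
  obtain ⟨u⟩ := hV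
  simpa using G.eigsDesc_getD_card_sub_one_mul_le (Pi.single u 1)

theorem eigsDesc_getD_card_sub_one_mul_le_fromBlocks {n : Type*} [Fintype n] (x : V ⊕ n → ℝ) :
    (eigsDesc G).getD (Fintype.card V - 1) 0 * (x ⬝ᵥ x) ≤
      x ⬝ᵥ (fromBlocks (G.adjMatrix ℝ) 0 0 0 *ᵥ x) := by
  have hsplit :
      x ⬝ᵥ x = (x ∘ Sum.inl) ⬝ᵥ (x ∘ Sum.inl) + (x ∘ Sum.inr) ⬝ᵥ (x ∘ Sum.inr) := by
    simp [dotProduct, Fintype.sum_sum_type]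
  have hinr : 0 ≤ (x ∘ Sum.inr) ⬝ᵥ (x ∘ Sum.inr) :=
    Finset.sum_nonneg fun _ _ => mul_self_nonneg _
  rw [dotProduct_fromBlocks_zero_mulVec, hsplit, mul_add]
  linarith [G.eigsDesc_getD_card_sub_one_mul_le (x ∘ Sum.inl),
    mul_nonpos_of_nonpos_of_nonneg G.eigsDesc_getD_card_sub_one_nonpos hinr]

end SimpleGraph

section AttachP2s

variable {V : Type*} {k : ℕ} (s : Fin k → ℕ)

theorem adjMatrix_attachP2s (T : SimpleGraph V) (v : Fin k → V) :
    (attachP2s T v s).adjMatrix ℝ =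
      (attachP2s ⊥ v s).adjMatrix ℝ + fromBlocks (T.adjMatrix ℝ) 0 0 0 := by
  ext (a | p | p) (b | q | q) <;>
    simp only [Matrix.add_apply, SimpleGraph.adjMatrix_apply] <;>
    simp [attachP2s, eq_comm, T.adj_comm,
      fun a b => and_iff_right_of_imp (@SimpleGraph.Adj.ne _ T a b)]

noncomputable def spiderVec (v : Fin k → V) (j : Fin k) :
    V ⊕ ((Σ i : Fin k, Fin (s i)) ⊕ (Σ i : Fin k, Fin (s i))) → ℝ
  | .inl a => if a = v j then s j else 0
  | .inr (.inl p) => if p.1 = j then √(s j + 1) else 0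
  | .inr (.inr p) => if p.1 = j then 1 else 0

variable {v : Fin k → V}

theorem adjMatrix_bot_mulVec_spiderVec [Fintype V] (hv : Function.Injective v) (j : Fin k) :
    (attachP2s ⊥ v s).adjMatrix ℝ *ᵥ spiderVec s v j = √(s j + 1) • spiderVec s v j := by
  ext (a | p | p) <;>
    simp only [mulVec, dotProduct, SimpleGraph.adjMatrix_apply, Fintype.sum_sum_type]
  · simp [attachP2s, spiderVec, Fintype.sum_sigma]
    split_ifs <;> simp [mul_comm]
  · simp [attachP2s, spiderVec, hv.eq_iff]
    rw [Fintype.sum_eq_single p fun q hq => by simp [Ne.symm hq]]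
    by_cases h : p.1 = j
    · subst h
      simp [Real.mul_self_sqrt (by positivity : (0 : ℝ) ≤ s p.1 + 1)]
    · simp [h, Ne.symm h]
  · simp [attachP2s, spiderVec]
    rw [Fintype.sum_eq_single p fun q hq => by simp [hq]]
    simp

theorem spiderVec_dotProduct_eq_zero [Fintype V] (hv : Function.Injective v) {j j' : Fin k}
    (h : j ≠ j') : spiderVec s v j ⬝ᵥ spiderVec s v j' = 0 := by
  refine Finset.sum_eq_zero fun w _ => ?_
  rcases w with a | p | p <;> simp only [spiderVec] <;> split_ifs <;> simp_all [hv.eq_iff]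

theorem spiderVec_ne_zero {j : Fin k} (hj : 0 < s j) : spiderVec s v j ≠ 0 := fun h => by
  simpa [spiderVec] using congrFun h (.inr (.inr ⟨j, ⟨0, hj⟩⟩))

theorem finrank_span_spiderVec_Iic [Fintype V] (hv : Function.Injective v) (hs : ∀ j, 0 < s j)
    (i : Fin k) :
    finrank ℝ (Submodule.span ℝ (Set.range fun l : Set.Iic i => spiderVec s v l)) = i + 1 :=
  (finrank_span_eq_card (linearIndependent_of_ne_zero_of_dotProduct_eq_zero
    (fun l : Set.Iic i => spiderVec_ne_zero s (hs l))
    (fun _ _ h => spiderVec_dotProduct_eq_zero s hv (Subtype.coe_ne_coe.mpr h)))).trans (by simp)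

theorem sqrt_mul_le_dotProduct_adjMatrix_bot_mulVec [Fintype V] (hv : Function.Injective v)
    (hs : Antitone s) (i : Fin k)
    {x : V ⊕ ((Σ i : Fin k, Fin (s i)) ⊕ (Σ i : Fin k, Fin (s i))) → ℝ}
    (hx : x ∈ Submodule.span ℝ (Set.range fun l : Set.Iic i => spiderVec s v l)) :
    √(s i + 1) * (x ⬝ᵥ x) ≤ x ⬝ᵥ ((attachP2s ⊥ v s).adjMatrix ℝ *ᵥ x) :=
  mul_dotProduct_self_le_of_mem_span
    (fun l : Set.Iic i => adjMatrix_bot_mulVec_spiderVec s hv l)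
    (fun _ _ h => spiderVec_dotProduct_eq_zero s hv (Subtype.coe_ne_coe.mpr h))
    (fun l => Real.sqrt_le_sqrt (by exact_mod_cast Nat.add_le_add_right (hs l.2) 1)) hx

end AttachP2s

theorem stmt15_general {V : Type*} [Fintype V] {k : ℕ} (T : SimpleGraph V)
    (v : Fin k → V) (hv : Function.Injective v)
    (s : Fin k → ℕ) (hpos : ∀ i, 0 < s i)
    (hanti : ∀ i j : Fin k, i ≤ j → s j ≤ s i) (i : Fin k) :
    Real.sqrt ((s i : ℝ) + 1) + (eigsDesc T).getD (Fintype.card V - 1) 0 ≤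
      (eigsDesc (attachP2s T v s)).getD (i : ℕ) 0 := by
  refine SimpleGraph.le_eigsDesc_getD_of_forall_mem _ (fun x hx => ?_)
    (finrank_span_spiderVec_Iic s hv hpos i).ge
  rw [adjMatrix_attachP2s, add_mulVec, dotProduct_add, add_mul]
  exact add_le_add (sqrt_mul_le_dotProduct_adjMatrix_bot_mulVec s hv hanti i hx)
    (T.eigsDesc_getD_card_sub_one_mul_le_fromBlocks x)

theorem stmt15 {V : Type*} [Fintype V] {k : ℕ} (T : SimpleGraph V) (hT : T.IsTree)
    (v : Fin k → V) (hv : Function.Injective v)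
    (s : Fin k → ℕ) (hpos : ∀ i, 0 < s i)
    (hanti : ∀ i j : Fin k, i ≤ j → s j ≤ s i) (i : Fin k) :
    Real.sqrt ((s i : ℝ) + 1) + (eigsDesc T).getD (Fintype.card V - 1) 0 ≤
      (eigsDesc (attachP2s T v s)).getD (i : ℕ) 0 :=
  stmt15_general T v hv s hpos hanti i
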